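/- arXiv:1303.7176 — 2 statements merged into one kernel-verified Lean document; each statement's English description precedes it below -/
import Mathlib

section
/- Let e₁, e₂, e₃, e₄ be orthonormal vectors in Im 𝕆 ≅ ℝ⁷ such that (e₁−ie₂) × (e₃−ie₄) = 0 in the complexification. Then (e₁ × e₂, e₃) = 0 and e₄ = −e₂ × (e₁ × e₃). -/
/-!
Taking `u = v = w` in the cross-product identity and using invariance of the form shows that
`u × u` is isotropic, so `u × u = 0` for real `u`. Splitting `(e₁ − i e₂) × (e₃ − i e₄) = 0`
into real and imaginary parts gives `e₁ × e₃ = e₂ × e₄` and `e₁ × e₄ = −e₂ × e₃`. Hence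
`(e₁ × e₂, e₃) = −(e₁, e₁ × e₄) = −(e₁ × e₁, e₄) = 0`, and the identity with `u = v = e₂`,
`w = e₄` gives `e₂ × (e₁ × e₃) = e₂ × (e₂ × e₄) = −e₄`. (In Lean, `eᵢ` is `e (i - 1)`.)
-/

open scoped ComplexConjugate

/-- The standard complex-bilinear symmetric form on `ℂⁿ`. -/
noncomputable def Bform {n : ℕ} (u v : Fin n → ℂ) : ℂ := ∑ i, u i * v i

/-- Componentwise complex conjugation on `ℂⁿ`. -/
noncomputable def conjn {n : ℕ} (v : Fin n → ℂ) : Fin n → ℂ := fun i => conj (v i)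

open scoped ComplexOrder
open Complex (I)

lemma Bform_eq_dotProduct {n : ℕ} (u v : Fin n → ℂ) : Bform u v = u ⬝ᵥ v := rfl

lemma conjn_eq_star {n : ℕ} (v : Fin n → ℂ) : conjn v = star v := rfl

lemma eq_zero_of_conjn_eq_self_of_Bform_self_eq_zero {n : ℕ} {v : Fin n → ℂ}
    (hv : conjn v = v) (h : Bform v v = 0) : v = 0 :=
  dotProduct_star_self_eq_zero.mp (by rwa [← conjn_eq_star, hv])

lemma eq_zero_of_sub_I_smul_eq_zero {ι : Type*} {a b : ι → ℂ} (ha : star a = a)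
    (hb : star b = b) (h : a - I • b = 0) : a = 0 ∧ b = 0 := by
  have h' : a + I • b = 0 := by
    simpa [star_sub, star_smul, ha, hb, sub_eq_add_neg] using congrArg star h
  refine ⟨?_, ?_⟩
  · linear_combination (norm := module) (1 / 2 : ℂ) • (h + h')
  · have : (2 * I) • b = 0 := by linear_combination (norm := module) h' - h
    simpa [Complex.I_ne_zero] using this

section Cross

variable {n : ℕ} (cross : (Fin n → ℂ) →ₗ[ℂ] (Fin n → ℂ) →ₗ[ℂ] (Fin n → ℂ))

lemma cross_sub_I_smul_sub_I_smul (a b c d : Fin n → ℂ) :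
    cross (a - I • b) (c - I • d) = (cross a c - cross b d) - I • (cross a d + cross b c) := by
  simp only [map_sub, map_smul, LinearMap.sub_apply, LinearMap.smul_apply, smul_sub, smul_smul,
    Complex.I_mul_I]
  module

lemma Bform_cross_self_cross_self_eq_zero
    (h1 : ∀ u v w, Bform u (cross v w) = Bform (cross u v) w)
    (h2 : ∀ u v w : Fin n → ℂ, cross u (cross v w) + cross (cross u v) w
        = (2 * Bform u w) • v - Bform u v • w - Bform v w • u)
    (u : Fin n → ℂ) : Bform (cross u u) (cross u u) = 0 := by
  have hsum : cross u (cross u u) + cross (cross u u) u = 0 := by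
    rw [h2]; module
  have key : Bform u (cross u (cross u u)) = -Bform (cross u u) (cross u u) := by
    rw [eq_neg_of_add_eq_zero_left hsum, Bform_eq_dotProduct, dotProduct_neg, dotProduct_comm,
      ← Bform_eq_dotProduct, ← h1]
  rw [h1] at key
  linear_combination key / 2

lemma cross_self_eq_zero_of_conjn_eq_self
    (h1 : ∀ u v w, Bform u (cross v w) = Bform (cross u v) w)
    (h2 : ∀ u v w : Fin n → ℂ, cross u (cross v w) + cross (cross u v) w
        = (2 * Bform u w) • v - Bform u v • w - Bform v w • u)
    (hconj : ∀ u v, conjn (cross u v) = cross (conjn u) (conjn v))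
    {u : Fin n → ℂ} (hu : conjn u = u) : cross u u = 0 :=
  eq_zero_of_conjn_eq_self_of_Bform_self_eq_zero (by rw [hconj, hu])
    (Bform_cross_self_cross_self_eq_zero cross h1 h2 u)

lemma cross_eq_of_cross_sub_I_smul_sub_I_smul_eq_zero
    (hconj : ∀ u v, conjn (cross u v) = cross (conjn u) (conjn v))
    {a b c d : Fin n → ℂ} (ha : conjn a = a) (hb : conjn b = b) (hc : conjn c = c)
    (hd : conjn d = d) (h : cross (a - I • b) (c - I • d) = 0) :
    cross a c = cross b d ∧ cross a d = -cross b c := by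
  have hreal : ∀ {x y}, conjn x = x → conjn y = y → star (cross x y) = cross x y :=
    fun hx hy => by rw [← conjn_eq_star, hconj, hx, hy]
  rw [cross_sub_I_smul_sub_I_smul] at h
  obtain ⟨hac, had⟩ := eq_zero_of_sub_I_smul_eq_zero
    (by simp only [star_sub, hreal ha hc, hreal hb hd])
    (by simp only [star_add, hreal ha hd, hreal hb hc]) h
  exact ⟨sub_eq_zero.mp hac, eq_neg_of_add_eq_zero_left had⟩

lemma cross_cross_self_eq_neg
    (h2 : ∀ u v w : Fin n → ℂ, cross u (cross v w) + cross (cross u v) w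
        = (2 * Bform u w) • v - Bform u v • w - Bform v w • u)
    {u w : Fin n → ℂ} (hu : cross u u = 0) (huu : Bform u u = 1) (huw : Bform u w = 0) :
    cross u (cross u w) = -w := by
  simpa [hu, huu, huw] using h2 u u w

end Cross

/-- If e₁,e₂,e₃,e₄ are orthonormal real vectors with
(e₁−ie₂) × (e₃−ie₄) = 0, then (e₁ × e₂, e₃) = 0 and e₄ = −e₂ × (e₁ × e₃). -/
theorem orthonormal_annihilating_quadruple
    (cross : (Fin 7 → ℂ) →ₗ[ℂ] (Fin 7 → ℂ) →ₗ[ℂ] (Fin 7 → ℂ))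
    (h1 : ∀ u v w, Bform u (cross v w) = Bform (cross u v) w)
    (h2 : ∀ u v w : Fin 7 → ℂ, cross u (cross v w) + cross (cross u v) w
        = (2 * Bform u w) • v - Bform u v • w - Bform v w • u)
    (hconj : ∀ u v, conjn (cross u v) = cross (conjn u) (conjn v))
    (e : Fin 4 → (Fin 7 → ℂ))
    (hreal : ∀ i, conjn (e i) = e i)
    (honb : ∀ i j, Bform (e i) (e j) = if i = j then 1 else 0)
    (huv : cross (e 0 - Complex.I • e 1) (e 2 - Complex.I • e 3) = 0) :
    Bform (cross (e 0) (e 1)) (e 2) = 0 ∧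
      e 3 = -(cross (e 1) (cross (e 0) (e 2))) := by
  have hself : ∀ i, cross (e i) (e i) = 0 := fun i =>
    cross_self_eq_zero_of_conjn_eq_self cross h1 h2 hconj (hreal i)
  obtain ⟨h02, h03⟩ := cross_eq_of_cross_sub_I_smul_sub_I_smul_eq_zero cross hconj
    (hreal 0) (hreal 1) (hreal 2) (hreal 3) huv
  refine ⟨?_, ?_⟩
  · calc Bform (cross (e 0) (e 1)) (e 2)
        = Bform (e 0) (cross (e 1) (e 2)) := (h1 _ _ _).symm
      _ = -Bform (cross (e 0) (e 0)) (e 3) := by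
        rw [← h1, h03, Bform_eq_dotProduct, Bform_eq_dotProduct, dotProduct_neg, neg_neg]
      _ = 0 := by rw [hself 0, Bform_eq_dotProduct, zero_dotProduct, neg_zero]
  · rw [h02, cross_cross_self_eq_neg cross h2 (hself 1) (by simp [honb]) (by simp [honb]),
      neg_neg]
end

section
/- Let F be a unit vector in Im 𝕆 and α, β ∈ T_F^{1,0} = {v ∈ F^⊥ ⊗ ℂ : F × v = iv}. Then |α × β|² = 2(|α|²|β|² − |(α, β̄)|²), where |v|² = (v, v̄). -/
/-!
Pairing `u × (v × w) + (u × v) × w = 2 (u, w) v - (u, v) w - (v, w) u` with a fourth vector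
expresses the sum `(p × q, r × s) + (q × r, s × p)` through inner products. When `F ×` acts on
`q, r, s` by eigenvalues, pairing the same identity with `p × F` gives a second relation, for
the difference. For `α, β ∈ T^{1,0}` and their conjugates in `T^{0,1}` the two relations
determine `|α × β|² = (α × β, ᾱ × β̄)`, using the isotropy of `T^{1,0}`, which is the
equal-eigenvalue case of the second relation.
-/

open scoped ComplexConjugate

section Bform

variable {n : ℕ}

theorem Bform_comm (u v : Fin n → ℂ) : Bform u v = Bform v u := dotProduct_comm u v

theorem Bform_add_left (u v w : Fin n → ℂ) : Bform (u + v) w = Bform u w + Bform v w :=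
  add_dotProduct u v w

theorem Bform_add_right (u v w : Fin n → ℂ) : Bform u (v + w) = Bform u v + Bform u w :=
  dotProduct_add u v w

theorem Bform_sub_right (u v w : Fin n → ℂ) : Bform u (v - w) = Bform u v - Bform u w :=
  dotProduct_sub u v w

theorem Bform_sub_left (u v w : Fin n → ℂ) : Bform (u - v) w = Bform u w - Bform v w :=
  sub_dotProduct u v w

theorem Bform_neg_right (u v : Fin n → ℂ) : Bform u (-v) = -Bform u v :=
  dotProduct_neg u v

theorem Bform_smul_left (c : ℂ) (u v : Fin n → ℂ) : Bform (c • u) v = c * Bform u v :=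
  smul_dotProduct c u v

theorem Bform_smul_right (c : ℂ) (u v : Fin n → ℂ) : Bform u (c • v) = c * Bform u v :=
  dotProduct_smul c u v

theorem Bform_conjn_conjn (u v : Fin n → ℂ) : Bform (conjn u) (conjn v) = conj (Bform u v) := by
  rw [Bform_comm u v]
  exact Matrix.star_dotProduct_star u v

theorem conjn_smul (c : ℂ) (v : Fin n → ℂ) : conjn (c • v) = conj c • conjn v := by
  ext i
  simp [conjn]

end Bform

structure IsCrossProduct {n : ℕ} (cross : (Fin n → ℂ) →ₗ[ℂ] (Fin n → ℂ) →ₗ[ℂ] (Fin n → ℂ)) :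
    Prop where
  Bform_cross : ∀ u v w, Bform u (cross v w) = Bform (cross u v) w
  cross_cross : ∀ u v w, cross u (cross v w) + cross (cross u v) w
    = (2 * Bform u w) • v - Bform u v • w - Bform v w • u

namespace IsCrossProduct

variable {n : ℕ} {cross : (Fin n → ℂ) →ₗ[ℂ] (Fin n → ℂ) →ₗ[ℂ] (Fin n → ℂ)}

theorem Bform_cross_cyclic (hcross : IsCrossProduct cross) (u v w : Fin n → ℂ) :
    Bform u (cross v w) = Bform v (cross w u) := by
  rw [hcross.Bform_cross v w u, Bform_comm]

theorem Bform_cross_add_Bform_cross (hcross : IsCrossProduct cross) (p q r s : Fin n → ℂ) :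
    Bform (cross p q) (cross r s) + Bform (cross q r) (cross s p)
      = 2 * Bform q s * Bform p r - Bform q r * Bform p s - Bform r s * Bform p q := by
  have h := congrArg (Bform p) (hcross.cross_cross q r s)
  rw [Bform_add_right, Bform_sub_right, Bform_sub_right, Bform_smul_right, Bform_smul_right,
    Bform_smul_right, hcross.Bform_cross p q, hcross.Bform_cross_cyclic p] at h
  linear_combination h

variable {F p q r s : Fin n → ℂ} {c d e : ℂ}

theorem cross_cross_eq_of_eigen_right (hcross : IsCrossProduct cross) (hFp : Bform F p = 0)
    (hFq : Bform F q = 0) (hq : cross F q = c • q) :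
    cross (cross p F) q = (2 * Bform p q) • F - c • cross p q := by
  have h := hcross.cross_cross p F q
  rw [hq, map_smul, Bform_comm p F, hFp, hFq] at h
  linear_combination (norm := module) h

theorem cross_cross_eq_of_eigen_left (hcross : IsCrossProduct cross) (hFq : Bform F q = 0)
    (hFr : Bform F r = 0) (hq : cross F q = c • q) :
    cross F (cross q r) = -(Bform q r • F) - c • cross q r := by
  have h := hcross.cross_cross F q r
  rw [hq, map_smul, LinearMap.smul_apply, hFq, hFr] at h
  linear_combination (norm := module) h

theorem Bform_cross_sub_Bform_cross_of_eigen (hcross : IsCrossProduct cross) (hFp : Bform F p = 0)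
    (hFq : Bform F q = 0) (hFr : Bform F r = 0) (hFs : Bform F s = 0)
    (hq : cross F q = c • q) (hr : cross F r = d • r) (hs : cross F s = e • s) :
    c * (Bform (cross p q) (cross r s) - Bform (cross q r) (cross s p))
      = (2 * d + c) * Bform p q * Bform r s + (2 * e - c) * Bform p s * Bform q r
        - 2 * d * Bform p r * Bform q s := by
  have hpF : ∀ v, Bform (cross p F) v = Bform p (cross F v) :=
    fun v => (hcross.Bform_cross p F v).symm
  -- `hsum` below pairs `cross_cross q r s` with `p × F`; `hW1`, `hW2` evaluate its two summands.
  have hW1 : Bform (cross p F) (cross q (cross r s))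
      = 2 * d * Bform p q * Bform r s - c * Bform (cross p q) (cross r s) := by
    rw [hcross.Bform_cross, hcross.cross_cross_eq_of_eigen_right hFp hFq hq, Bform_sub_left,
      Bform_smul_left, Bform_smul_left, hcross.Bform_cross F r s, hr, Bform_smul_left]
    ring
  have hW2 : Bform (cross p F) (cross (cross q r) s)
      = c * Bform (cross q r) (cross s p) + (e - c) * Bform q r * Bform p s := by
    have h := hcross.cross_cross F (cross q r) s
    rw [hcross.cross_cross_eq_of_eigen_left hFq hFr hq, hcross.Bform_cross F q r, hq, hFs] at h
    simp only [map_sub, map_neg, map_smul, LinearMap.sub_apply, LinearMap.neg_apply,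
      LinearMap.smul_apply, hs] at h
    have h' := congrArg (Bform p) h
    simp only [Bform_add_right, Bform_sub_right, Bform_smul_right, Bform_smul_left,
      Bform_neg_right] at h'
    rw [hcross.Bform_cross_cyclic p (cross q r) s, Bform_comm p F, hFp] at h'
    rw [hpF]
    linear_combination h'
  have hsum := congrArg (Bform (cross p F)) (hcross.cross_cross q r s)
  rw [Bform_add_right, Bform_sub_right, Bform_sub_right, Bform_smul_right, Bform_smul_right,
    Bform_smul_right, hpF r, hpF s, hpF q, hq, hr, hs, Bform_smul_right, Bform_smul_right,
    Bform_smul_right] at hsum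
  linear_combination hW1 + hW2 - hsum

theorem Bform_cross_sub_Bform_cross_of_eigen_neg (hcross : IsCrossProduct cross) (hc : c ≠ 0)
    (hFp : Bform F p = 0) (hFq : Bform F q = 0) (hFr : Bform F r = 0) (hFs : Bform F s = 0)
    (hq : cross F q = c • q) (hr : cross F r = -c • r) (hs : cross F s = -c • s) :
    Bform (cross p q) (cross r s) - Bform (cross q r) (cross s p)
      = 2 * Bform p r * Bform q s - 3 * Bform p s * Bform q r - Bform p q * Bform r s := by
  refine mul_left_cancel₀ hc ?_
  linear_combination hcross.Bform_cross_sub_Bform_cross_of_eigen hFp hFq hFr hFs hq hr hs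

theorem Bform_self_eq_zero_of_eigen (hcross : IsCrossProduct cross) (hc : c ≠ 0)
    (hFp : Bform F p = 0) (hp : cross F p = c • p) : Bform p p = 0 := by
  have h := hcross.Bform_cross_sub_Bform_cross_of_eigen hFp hFp hFp hFp hp hp hp
  have h2 : (2 * c) * Bform p p ^ 2 = 0 := by linear_combination -h
  simpa [hc] using h2

theorem Bform_eq_zero_of_eigen (hcross : IsCrossProduct cross) (hc : c ≠ 0)
    (hFp : Bform F p = 0) (hFq : Bform F q = 0) (hp : cross F p = c • p)
    (hq : cross F q = c • q) : Bform p q = 0 := by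
  have hFpq : Bform F (p + q) = 0 := by rw [Bform_add_right, hFp, hFq, add_zero]
  have hpq : cross F (p + q) = c • (p + q) := by rw [map_add, hp, hq, smul_add]
  have h := hcross.Bform_self_eq_zero_of_eigen hc hFpq hpq
  rw [Bform_add_left, Bform_add_right, Bform_add_right, Bform_comm q p,
    hcross.Bform_self_eq_zero_of_eigen hc hFp hp,
    hcross.Bform_self_eq_zero_of_eigen hc hFq hq] at h
  linear_combination h / 2

end IsCrossProduct

section Conj

variable {n : ℕ} {F v : Fin n → ℂ}

theorem Bform_conjn_eq_zero (hF : conjn F = F) (hv : Bform F v = 0) : Bform F (conjn v) = 0 := by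
  rw [← hF, Bform_conjn_conjn, hv, map_zero]

theorem cross_conjn_eq_of_eigen {cross : (Fin n → ℂ) →ₗ[ℂ] (Fin n → ℂ) →ₗ[ℂ] (Fin n → ℂ)}
    (hconj : ∀ u v, conjn (cross u v) = cross (conjn u) (conjn v)) (hF : conjn F = F) {c : ℂ}
    (hv : cross F v = c • v) : cross F (conjn v) = conj c • conjn v := by
  rw [← hF, ← hconj, hv, conjn_smul]

end Conj

theorem norm_sq_cross_onezero_general
    (cross : (Fin 7 → ℂ) →ₗ[ℂ] (Fin 7 → ℂ) →ₗ[ℂ] (Fin 7 → ℂ))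
    (h1 : ∀ u v w, Bform u (cross v w) = Bform (cross u v) w)
    (h2 : ∀ u v w : Fin 7 → ℂ, cross u (cross v w) + cross (cross u v) w
        = (2 * Bform u w) • v - Bform u v • w - Bform v w • u)
    (hconj : ∀ u v, conjn (cross u v) = cross (conjn u) (conjn v))
    (F : Fin 7 → ℂ) (hFreal : conjn F = F)
    (α β : Fin 7 → ℂ)
    (hαperp : Bform F α = 0) (hα : cross F α = Complex.I • α)
    (hβperp : Bform F β = 0) (hβ : cross F β = Complex.I • β) :
    Bform (cross α β) (conjn (cross α β))
      = 2 * (Bform α (conjn α) * Bform β (conjn β)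
          - Bform α (conjn β) * Bform (conjn α) β) := by
  have hcross : IsCrossProduct cross := ⟨h1, h2⟩
  have hα' := cross_conjn_eq_of_eigen hconj hFreal hα
  have hβ' := cross_conjn_eq_of_eigen hconj hFreal hβ
  rw [Complex.conj_I] at hα' hβ'
  have hαβ := hcross.Bform_eq_zero_of_eigen Complex.I_ne_zero hαperp hβperp hα hβ
  have hsum := hcross.Bform_cross_add_Bform_cross α β (conjn α) (conjn β)
  have hdiff := hcross.Bform_cross_sub_Bform_cross_of_eigen_neg Complex.I_ne_zero hαperp hβperp
    (Bform_conjn_eq_zero hFreal hαperp) (Bform_conjn_eq_zero hFreal hβperp) hβ hα' hβ'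
  rw [hconj α β, Bform_comm (conjn α) β]
  linear_combination (hsum + hdiff) / 2 - Bform (conjn α) (conjn β) * hαβ

/-- For F a real unit vector and α, β ∈ T_F^{1,0},
|α × β|² = 2(|α|²|β|² − |(α, β̄)|²), where |v|² = (v, v̄). -/
theorem norm_sq_cross_onezero
    (cross : (Fin 7 → ℂ) →ₗ[ℂ] (Fin 7 → ℂ) →ₗ[ℂ] (Fin 7 → ℂ))
    (h1 : ∀ u v w, Bform u (cross v w) = Bform (cross u v) w)
    (h2 : ∀ u v w : Fin 7 → ℂ, cross u (cross v w) + cross (cross u v) w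
        = (2 * Bform u w) • v - Bform u v • w - Bform v w • u)
    (hconj : ∀ u v, conjn (cross u v) = cross (conjn u) (conjn v))
    (F : Fin 7 → ℂ) (hFreal : conjn F = F) (hFunit : Bform F F = 1)
    (α β : Fin 7 → ℂ)
    (hαperp : Bform F α = 0) (hα : cross F α = Complex.I • α)
    (hβperp : Bform F β = 0) (hβ : cross F β = Complex.I • β) :
    Bform (cross α β) (conjn (cross α β))
      = 2 * (Bform α (conjn α) * Bform β (conjn β)
          - Bform α (conjn β) * Bform (conjn α) β) :=
  norm_sq_cross_onezero_general cross h1 h2 hconj F hFreal α β hαperp hα hβperp hβ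
end
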